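/- Let α/β and γ/δ be skew shapes. A skew tableau E of shape α/β with entries in positive integers is the row reading of some picture f : α/β → γ/δ if and only if E is semistandard, for each i the symbol i occurs exactly γᵢ − δᵢ times in E, and E is δ-shifted Yamanouchi, i.e. for every initial segment w′ of the reading word w(E) and every i one has δᵢ + aᵢ(w′) ≥ δᵢ₊₁ + aᵢ₊₁(w′), where aᵢ(w′) is the number of occurrences of the symbol i in w′. -/

import Mathlib

noncomputable section

/-- A partition, written 1-based: `α i` is the length of row `i` for `i ≥ 1`
(we normalize `α 0 = 0`); it is weakly decreasing and eventually zero. -/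
def IsPartition (α : ℕ → ℕ) : Prop :=
  α 0 = 0 ∧ (∀ i j, 1 ≤ i → i ≤ j → α j ≤ α i) ∧ ∃ N, ∀ i, N ≤ i → α i = 0

/-- The set of cells of the skew diagram `α/β` (rows and columns 1-based):
`(i,j)` with `β i < j ≤ α i`. -/
def cellOf (α β : ℕ → ℕ) : Set (ℕ × ℕ) := {p | β p.1 < p.2 ∧ p.2 ≤ α p.1}

/-- The conjugate partition (1-based): `(conjP α) j = #{i ≥ 1 | α i ≥ j}` for `j ≥ 1`. -/
def conjP (α : ℕ → ℕ) (j : ℕ) : ℕ := Set.ncard {i : ℕ | 1 ≤ i ∧ 1 ≤ j ∧ j ≤ α i}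

/-- Semistandard skew tableau: entries weakly increase along rows (left to right) and
strictly increase down columns. -/
def IsSSkew (α β : ℕ → ℕ) (T : ℕ × ℕ → ℕ) : Prop :=
  (∀ i j j', (i, j) ∈ cellOf α β → (i, j') ∈ cellOf α β → j ≤ j' → T (i, j) ≤ T (i, j')) ∧
  (∀ i i' j, (i, j) ∈ cellOf α β → (i', j) ∈ cellOf α β → i < i' → T (i, j) < T (i', j))

/-- Anti-semistandard skew tableau: entries strictly decrease along rows (left to right)
and weakly decrease down columns. -/
def IsAntiSSkew (α β : ℕ → ℕ) (T : ℕ × ℕ → ℕ) : Prop :=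
  (∀ i j j', (i, j) ∈ cellOf α β → (i, j') ∈ cellOf α β → j < j' → T (i, j') < T (i, j)) ∧
  (∀ i i' j, (i, j) ∈ cellOf α β → (i', j) ∈ cellOf α β → i ≤ i' → T (i', j) ≤ T (i, j))

/-- `wle p q` : cell `p` comes weakly before cell `q` in the reading order of the reading
word (rows top to bottom, inside each row right to left). -/
def wle (p q : ℕ × ℕ) : Prop := p.1 < q.1 ∨ (p.1 = q.1 ∧ q.2 ≤ p.2)

/-- Number of occurrences of the symbol `v` among the cells weakly before `x` in the
reading word of `T` (so "the `j`-th occurrence of `v` in `w(T)` is at the cell `x`" reads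
`x ∈ cellOf α β ∧ T x = v ∧ occBefore α β T v x = j`). -/
def occBefore (α β : ℕ → ℕ) (T : ℕ × ℕ → ℕ) (v : ℕ) (x : ℕ × ℕ) : ℕ :=
  Set.ncard {p | p ∈ cellOf α β ∧ wle p x ∧ T p = v}

/-- Total number of occurrences of the symbol `v` in the skew tableau `T`. -/
def occCount (α β : ℕ → ℕ) (T : ℕ × ℕ → ℕ) (v : ℕ) : ℕ :=
  Set.ncard {p | p ∈ cellOf α β ∧ T p = v}

/-- The reading word of `T` is a lattice word for the symbols `base, base+1, …` :
in every initial segment, `v+1` occurs at most as often as `v`, for every `v ≥ base`. -/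
def IsLatticeFrom (α β : ℕ → ℕ) (T : ℕ × ℕ → ℕ) (base : ℕ) : Prop :=
  ∀ x ∈ cellOf α β, ∀ v, base ≤ v → occBefore α β T (v + 1) x ≤ occBefore α β T v x

/-- `T` (with symbols `m+1, m+2, …`) is shifted Yamanouchi with respect to the shift `ω`:
for every initial segment `w′` of the reading word and every `i ≥ 1`,
`ω i + a_i(w′) ≥ ω (i+1) + a_{i+1}(w′)`. -/
def ShiftedYam (α β : ℕ → ℕ) (m : ℕ) (ω : ℕ → ℕ) (T : ℕ × ℕ → ℕ) : Prop :=
  ∀ x ∈ cellOf α β, ∀ i, 1 ≤ i →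
    ω (i + 1) + occBefore α β T (m + i + 1) x ≤ ω i + occBefore α β T (m + i) x

/-- `Tm = Rp(Tp)` : if the `j`-th occurrence of the symbol `m+i` in the reading word of
`Tp` lies in column `c` of `Tp`, then the entry of `Tm` at the cell `(i, ω i + j)` is `c`. -/
def IsRp (α β : ℕ → ℕ) (m : ℕ) (ω : ℕ → ℕ) (Tp Tm : ℕ × ℕ → ℕ) : Prop :=
  ∀ x ∈ cellOf α β, ∀ i, 1 ≤ i → Tp x = m + i →
    Tm (i, ω i + occBefore α β Tp (m + i) x) = x.2

/-- `λ⁺` : the first `m` rows of `λ`. -/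
def lamPlus (m : ℕ) (la : ℕ → ℕ) : ℕ → ℕ := fun i => if i ≤ m then la i else 0

/-- `λ⁻` : the conjugate of the partition `(λ_{m+1}, λ_{m+2}, …)`. -/
def lamMinus (m : ℕ) (la : ℕ → ℕ) : ℕ → ℕ :=
  conjP (fun i => if 1 ≤ i then la (m + i) else 0)

/-- `p ≤_NW q`. -/
def leNW (p q : ℕ × ℕ) : Prop := p.1 ≤ q.1 ∧ p.2 ≤ q.2

/-- `p ≤_SW q`. -/
def leSW (p q : ℕ × ℕ) : Prop := p.1 ≤ q.1 ∧ q.2 ≤ p.2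

/-- A picture `f : α/β → γ/δ` : a bijection of the cell sets such that
`x ≤_NW y → f x ≤_SW f y` and `f x ≤_NW f y → x ≤_SW y`. -/
def IsPicture (α β γ δ : ℕ → ℕ) (f : ℕ × ℕ → ℕ × ℕ) : Prop :=
  Set.BijOn f (cellOf α β) (cellOf γ δ) ∧
    (∀ p ∈ cellOf α β, ∀ q ∈ cellOf α β, leNW p q → leSW (f p) (f q)) ∧
    (∀ p ∈ cellOf α β, ∀ q ∈ cellOf α β, leNW (f p) (f q) → leSW p q)


/-!
A picture with row reading `E` is forced: it sends the cells holding a symbol `v` into row `v`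
of `γ/δ` from left to right in reading order, so the `k`-th occurrence of `v` in the reading word
goes to column `δ v + k` (`pictureCol`). Conversely, this map is a bijection onto `γ/δ` exactly
when `v` occurs `γ v - δ v` times, and it is a picture as soon as `pictureCol` weakly decreases
towards the south-east, strictly when the column grows. Along a row this is the Yamanouchi
inequality chained from `E p` up to `E q`. Down a column, from `(i, j)` to `(i + 1, j)` with
`u = E (i, j)`, it is the Yamanouchi inequality at the leftmost entry `> u` of row `i`, combined
with the observation that the entries `u + 1` of row `i + 1` read before `(i + 1, j)` sit below
entries `u` of row `i` read before `(i, j)`.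
-/

section ReadingOrder

lemma wle_refl (p : ℕ × ℕ) : wle p p := Or.inr ⟨rfl, le_rfl⟩

lemma wle_trans {p q r : ℕ × ℕ} (h₁ : wle p q) (h₂ : wle q r) : wle p r := by
  unfold wle at *; omega

lemma wle_antisymm {p q : ℕ × ℕ} (h₁ : wle p q) (h₂ : wle q p) : p = q := by
  unfold wle at *; ext <;> omega

lemma wle_of_not_wle {p q : ℕ × ℕ} (h : ¬ wle p q) : wle q p ∧ q ≠ p := by
  unfold wle at *
  refine ⟨by omega, ?_⟩
  rintro rfl
  omega

lemma wle_of_leSW {p q : ℕ × ℕ} (h : leSW p q) : wle p q := by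
  unfold leSW at h; unfold wle; omega

lemma wle_iff_toLex_le (p q : ℕ × ℕ) :
    wle p q ↔ toLex (p.1, OrderDual.toDual p.2) ≤ toLex (q.1, OrderDual.toDual q.2) := by
  simp [wle, Prod.Lex.le_iff]

lemma exists_wle_max {S : Set (ℕ × ℕ)} (hS : S.Finite) (hne : S.Nonempty) :
    ∃ m ∈ S, ∀ p ∈ S, wle p m := by
  obtain ⟨m, hm, hmax⟩ := S.exists_max_image (fun p => toLex (p.1, OrderDual.toDual p.2)) hS hne
  exact ⟨m, hm, fun p hp => (wle_iff_toLex_le p m).2 (hmax p hp)⟩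

end ReadingOrder

section Cells

variable {α β : ℕ → ℕ}

lemma one_le_fst_of_mem_cellOf (hα : IsPartition α) {p : ℕ × ℕ} (hp : p ∈ cellOf α β) :
    1 ≤ p.1 := by
  by_contra h
  have hp₂ := hp.2
  rw [show p.1 = 0 by omega, hα.1] at hp₂
  exact absurd hp.1 (by omega)

lemma cellOf_finite (hα : IsPartition α) : (cellOf α β).Finite := by
  obtain ⟨h₀, hanti, N, hN⟩ := hα
  refine ((Set.finite_Iio N).prod (Set.finite_Iic (α 1))).subset ?_
  rintro ⟨i, j⟩ ⟨hjβ, hjα⟩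
  simp only [Set.mem_prod, Set.mem_Iio, Set.mem_Iic]
  constructor
  · by_contra h
    have := hN i (by omega)
    simp only at hjα hjβ
    omega
  · rcases Nat.eq_zero_or_pos i with rfl | hi
    · simp only [h₀] at hjα; omega
    · exact hjα.trans (hanti 1 i le_rfl hi)

lemma mem_cellOf_of_le_of_le (hα : IsPartition α) (hβ : IsPartition β)
    {i i' k j : ℕ} (h : (i, j) ∈ cellOf α β) (h' : (i', j) ∈ cellOf α β)
    (hik : i ≤ k) (hki' : k ≤ i') : (k, j) ∈ cellOf α β := by
  have hi := one_le_fst_of_mem_cellOf hα h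
  exact ⟨(hβ.2.1 i k hi hik).trans_lt h.1, h'.2.trans (hα.2.1 k i' (hi.trans hik) hki')⟩

lemma mem_cellOf_corner (hα : IsPartition α) (hβ : IsPartition β)
    {p q : ℕ × ℕ} (hp : p ∈ cellOf α β) (hq : q ∈ cellOf α β) (h : leNW p q) :
    (q.1, p.2) ∈ cellOf α β :=
  ⟨(hβ.2.1 p.1 q.1 (one_le_fst_of_mem_cellOf hα hp) h.1).trans_lt hp.1, h.2.trans hq.2⟩

lemma ncard_cellOf_row (γ δ : ℕ → ℕ) {v c : ℕ} (hc : c ≤ γ v) :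
    {y | y ∈ cellOf γ δ ∧ y.1 = v ∧ y.2 ≤ c}.ncard = c - δ v := by
  have : {y | y ∈ cellOf γ δ ∧ y.1 = v ∧ y.2 ≤ c} = (fun t => (v, t)) '' Set.Ioc (δ v) c := by
    ext ⟨a, b⟩
    simp only [cellOf, Set.mem_ofPred_eq, Set.mem_image, Set.mem_Ioc, Prod.mk.injEq]
    constructor
    · rintro ⟨⟨h₁, -⟩, rfl, h₂⟩
      exact ⟨b, ⟨h₁, h₂⟩, rfl, rfl⟩
    · rintro ⟨t, ⟨h₁, h₂⟩, rfl, rfl⟩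
      exact ⟨⟨h₁, h₂.trans hc⟩, rfl, h₂⟩
  rw [this, Set.ncard_image_of_injective _ (Prod.mk_right_injective v), Set.ncard_Ioc_nat]

end Cells

section Occurrences

variable {α β : ℕ → ℕ} {T : ℕ × ℕ → ℕ} {v : ℕ}

lemma occBefore_mono (hα : IsPartition α) {x y : ℕ × ℕ} (h : wle x y) :
    occBefore α β T v x ≤ occBefore α β T v y :=
  Set.ncard_le_ncard (fun _ hp => ⟨hp.1, wle_trans hp.2.1 h, hp.2.2⟩)
    ((cellOf_finite hα).subset fun _ hp => hp.1)

lemma occBefore_lt (hα : IsPartition α) {x y : ℕ × ℕ} (hy : y ∈ cellOf α β) (hTy : T y = v)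
    (h : wle x y) (hne : x ≠ y) : occBefore α β T v x < occBefore α β T v y :=
  Set.ncard_lt_ncard
    ⟨fun _ hp => ⟨hp.1, wle_trans hp.2.1 h, hp.2.2⟩,
      fun hsub => hne (wle_antisymm h (hsub ⟨hy, wle_refl y, hTy⟩).2.1)⟩
    ((cellOf_finite hα).subset fun _ hp => hp.1)

lemma one_le_occBefore (hα : IsPartition α) {x : ℕ × ℕ} (hx : x ∈ cellOf α β) :
    1 ≤ occBefore α β T (T x) x :=
  (Set.ncard_pos ((cellOf_finite hα).subset fun _ hp => hp.1)).2 ⟨x, hx, wle_refl x, rfl⟩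

lemma occBefore_le_occCount (hα : IsPartition α) (x : ℕ × ℕ) :
    occBefore α β T v x ≤ occCount α β T v :=
  Set.ncard_le_ncard (fun _ hp => ⟨hp.1, hp.2.2⟩) ((cellOf_finite hα).subset fun _ hp => hp.1)

lemma occBefore_injOn (hα : IsPartition α) :
    Set.InjOn (occBefore α β T v) {p | p ∈ cellOf α β ∧ T p = v} := by
  intro p hp q hq hpq
  by_contra hne
  by_cases h : wle p q
  · exact (occBefore_lt hα hq.1 hq.2 h hne).ne hpq
  · obtain ⟨h', hne'⟩ := wle_of_not_wle h
    exact (occBefore_lt hα hp.1 hp.2 h' hne').ne' hpq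

lemma exists_occBefore_eq (hα : IsPartition α) {k : ℕ} (hk₁ : 1 ≤ k)
    (hk₂ : k ≤ occCount α β T v) :
    ∃ p ∈ cellOf α β, T p = v ∧ occBefore α β T v p = k := by
  set O := {p | p ∈ cellOf α β ∧ T p = v}
  have himage : occBefore α β T v '' O ⊆ Set.Icc 1 (occCount α β T v) := by
    rintro _ ⟨p, hp, rfl⟩
    rw [← hp.2]
    exact ⟨one_le_occBefore hα hp.1, occBefore_le_occCount hα p⟩
  have heq : occBefore α β T v '' O = Set.Icc 1 (occCount α β T v) :=
    Set.eq_of_subset_of_ncard_le himage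
      (by rw [(occBefore_injOn hα).ncard_image, Set.ncard_Icc_nat, Nat.add_sub_cancel]; rfl)
      (Set.finite_Icc _ _)
  obtain ⟨p, hp, hpk⟩ := heq.symm.subset ⟨hk₁, hk₂⟩
  exact ⟨p, hp.1, hp.2, hpk⟩

lemma exists_wle_occBefore_eq (hα : IsPartition α) {x : ℕ × ℕ}
    (h : occBefore α β T v x ≠ 0) :
    ∃ p ∈ cellOf α β, T p = v ∧ wle p x ∧ occBefore α β T v p = occBefore α β T v x := by
  obtain ⟨m, ⟨hm, hmx, hTm⟩, hmax⟩ := exists_wle_max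
    ((cellOf_finite hα).subset fun _ hp => hp.1) (Set.nonempty_of_ncard_ne_zero h)
  refine ⟨m, hm, hTm, hmx, congrArg Set.ncard (Set.ext fun p => ⟨?_, ?_⟩)⟩
  · exact fun hp => ⟨hp.1, wle_trans hp.2.1 hmx, hp.2.2⟩
  · exact fun hp => ⟨hp.1, hmax p hp, hp.2.2⟩

end Occurrences

namespace ShiftedYam

variable {α β δ : ℕ → ℕ} {T : ℕ × ℕ → ℕ}

lemma add_occBefore_le_of_le (hY : ShiftedYam α β 0 δ T) {x : ℕ × ℕ} (hx : x ∈ cellOf α β)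
    {u v : ℕ} (hu : 1 ≤ u) (huv : u ≤ v) :
    δ v + occBefore α β T v x ≤ δ u + occBefore α β T u x := by
  induction v, huv using Nat.le_induction with
  | base => exact le_rfl
  | succ n hn ih =>
    have := hY x hx n (hu.trans hn)
    rw [Nat.zero_add] at this
    omega

lemma add_ncard_le_of_isPrefix (hα : IsPartition α) (hδ : IsPartition δ)
    (hY : ShiftedYam α β 0 δ T) {S : Set (ℕ × ℕ)} (hS : S ⊆ cellOf α β)
    (hprefix : ∀ p ∈ S, ∀ q ∈ cellOf α β, wle q p → q ∈ S) {v : ℕ} (hv : 1 ≤ v) :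
    δ (v + 1) + {p | p ∈ S ∧ T p = v + 1}.ncard ≤ δ v + {p | p ∈ S ∧ T p = v}.ncard := by
  rcases S.eq_empty_or_nonempty with rfl | hne
  · simpa using hδ.2.1 v (v + 1) hv v.le_succ
  obtain ⟨m, hm, hmax⟩ := exists_wle_max ((cellOf_finite hα).subset hS) hne
  have hS_eq (w : ℕ) :
      {p | p ∈ S ∧ T p = w} = {p | p ∈ cellOf α β ∧ wle p m ∧ T p = w} := by
    ext p
    exact ⟨fun hp => ⟨hS hp.1, hmax p hp.1, hp.2⟩,
      fun hp => ⟨hprefix m hm p hp.1 hp.2.1, hp.2.2⟩⟩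
  have := hY m (hS hm) v hv
  rw [Nat.zero_add] at this
  rwa [hS_eq, hS_eq]

lemma add_ncard_le_of_rows (hα : IsPartition α) (hδ : IsPartition δ) (hss : IsSSkew α β T)
    (hY : ShiftedYam α β 0 δ T) (i : ℕ) {u : ℕ} (hu : 1 ≤ u) :
    δ (u + 1) + {r | r ∈ cellOf α β ∧ r.1 ≤ i ∧ T r = u + 1}.ncard ≤
      δ u + {r | r ∈ cellOf α β ∧ r.1 < i ∧ T r = u}.ncard := by
  -- the reading word up to the leftmost entry `> u` of row `i`
  set S := {r | r ∈ cellOf α β ∧ (r.1 < i ∨ (r.1 = i ∧ u + 1 ≤ T r))}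
  have hprefix : ∀ r ∈ S, ∀ s ∈ cellOf α β, wle s r → s ∈ S := by
    rintro ⟨r₁, r₂⟩ ⟨hr, hri⟩ ⟨s₁, s₂⟩ hs hsr
    unfold wle at hsr
    simp only at hsr hri
    refine ⟨hs, ?_⟩
    rcases hsr with hsr | ⟨rfl, hrs⟩
    · omega
    · have := hss.1 s₁ r₂ s₂ hr hs hrs
      omega
  have hS₁ : {r | r ∈ S ∧ T r = u + 1} = {r | r ∈ cellOf α β ∧ r.1 ≤ i ∧ T r = u + 1} :=
    Set.ext fun r => ⟨fun ⟨⟨hr, hri⟩, hT⟩ => ⟨hr, by omega, hT⟩,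
      fun ⟨hr, hri, hT⟩ => ⟨⟨hr, by omega⟩, hT⟩⟩
  have hS₀ : {r | r ∈ S ∧ T r = u} = {r | r ∈ cellOf α β ∧ r.1 < i ∧ T r = u} :=
    Set.ext fun r => ⟨fun ⟨⟨hr, hri⟩, hT⟩ => ⟨hr, by omega, hT⟩,
      fun ⟨hr, hri, hT⟩ => ⟨⟨hr, by omega⟩, hT⟩⟩
  rw [← hS₁, ← hS₀]
  exact hY.add_ncard_le_of_isPrefix hα hδ (fun _ hr => hr.1) hprefix hu

end ShiftedYam

def pictureCol (α β δ : ℕ → ℕ) (E : ℕ × ℕ → ℕ) (p : ℕ × ℕ) : ℕ :=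
  δ (E p) + occBefore α β E (E p) p

def pictureOf (α β δ : ℕ → ℕ) (E : ℕ × ℕ → ℕ) (p : ℕ × ℕ) : ℕ × ℕ :=
  (E p, pictureCol α β δ E p)

namespace IsPicture

variable {α β γ δ : ℕ → ℕ} {f : ℕ × ℕ → ℕ × ℕ} {E : ℕ × ℕ → ℕ}

lemma isSSkew (hf : IsPicture α β γ δ f) (hE : ∀ p ∈ cellOf α β, E p = (f p).1) :
    IsSSkew α β E := by
  refine ⟨fun i j j' h h' hjj' => ?_, fun i i' j h h' hii' => ?_⟩
  · rw [hE _ h, hE _ h']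
    exact (hf.2.1 _ h _ h' ⟨le_rfl, hjj'⟩).1
  · rw [hE _ h, hE _ h']
    obtain ⟨hrow, hcol⟩ := hf.2.1 _ h _ h' ⟨hii'.le, le_rfl⟩
    refine hrow.lt_of_ne fun heq => ?_
    have := (hf.2.2 _ h' _ h ⟨heq.ge, hcol⟩).1
    exact absurd hii' (by simpa using this)

lemma snd_lt_snd (hf : IsPicture α β γ δ f) {p q : ℕ × ℕ} (hp : p ∈ cellOf α β)
    (hq : q ∈ cellOf α β) (hrow : (f p).1 = (f q).1) (hpq : wle p q) (hne : p ≠ q) :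
    (f p).2 < (f q).2 := by
  by_contra hcol
  have := hf.2.2 _ hq _ hp ⟨hrow.ge, not_lt.1 hcol⟩
  unfold leSW at this
  unfold wle at hpq
  exact hne (Prod.ext (by omega) (by omega))

lemma snd_eq_pictureCol (hf : IsPicture α β γ δ f) (hE : ∀ p ∈ cellOf α β, E p = (f p).1)
    {p : ℕ × ℕ} (hp : p ∈ cellOf α β) :
    (f p).2 = pictureCol α β δ E p := by
  have hfp := hf.1.mapsTo hp
  rw [pictureCol, hE p hp]
  have himage : f '' {q | q ∈ cellOf α β ∧ wle q p ∧ E q = (f p).1} =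
      {y | y ∈ cellOf γ δ ∧ y.1 = (f p).1 ∧ y.2 ≤ (f p).2} := by
    ext y
    constructor
    · rintro ⟨q, ⟨hq, hqp, hEq⟩, rfl⟩
      refine ⟨hf.1.mapsTo hq, (hE q hq).symm.trans hEq, ?_⟩
      rcases eq_or_ne q p with rfl | hne
      · exact le_rfl
      · exact (hf.snd_lt_snd hq hp ((hE q hq).symm.trans hEq) hqp hne).le
    · rintro ⟨hy, hrow, hcol⟩
      obtain ⟨q, hq, rfl⟩ := hf.1.surjOn hy
      refine ⟨q, ⟨hq, by_contra fun hqp => ?_, (hE q hq).trans hrow⟩, rfl⟩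
      obtain ⟨hpq, hne⟩ := wle_of_not_wle hqp
      exact absurd hcol (not_le.2 (hf.snd_lt_snd hp hq hrow.symm hpq hne))
  have hcard := congrArg Set.ncard himage
  rw [(hf.1.injOn.mono fun _ hq => hq.1).ncard_image, ncard_cellOf_row γ δ hfp.2] at hcard
  have := hfp.1
  unfold occBefore
  omega

lemma occCount_eq (hf : IsPicture α β γ δ f) (hE : ∀ p ∈ cellOf α β, E p = (f p).1) (v : ℕ) :
    occCount α β E v = γ v - δ v := by
  have himage : f '' {p | p ∈ cellOf α β ∧ E p = v} =
      {y | y ∈ cellOf γ δ ∧ y.1 = v ∧ y.2 ≤ γ v} := by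
    ext y
    constructor
    · rintro ⟨p, ⟨hp, rfl⟩, rfl⟩
      have hfp := hf.1.mapsTo hp
      exact ⟨hfp, (hE p hp).symm, by rw [hE p hp]; exact hfp.2⟩
    · rintro ⟨hy, rfl, -⟩
      obtain ⟨p, hp, rfl⟩ := hf.1.surjOn hy
      exact ⟨p, ⟨hp, hE p hp⟩, rfl⟩
  rw [← ncard_cellOf_row γ δ le_rfl, ← himage, (hf.1.injOn.mono fun _ hp => hp.1).ncard_image]
  rfl

lemma shiftedYam (hα : IsPartition α) (hγ : IsPartition γ) (hδ : IsPartition δ)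
    (hf : IsPicture α β γ δ f) (hE : ∀ p ∈ cellOf α β, E p = (f p).1) :
    ShiftedYam α β 0 δ E := by
  intro x hx i hi
  rw [Nat.zero_add]
  by_cases hb : occBefore α β E (i + 1) x = 0
  · have := hδ.2.1 i (i + 1) hi i.le_succ
    omega
  obtain ⟨p, hp, hEp, hpx, hocc⟩ := exists_wle_occBefore_eq hα hb
  have hfp : f p = (i + 1, δ (i + 1) + occBefore α β E (i + 1) x) := by
    rw [← hocc, ← hEp]
    exact Prod.ext (hE p hp).symm (hf.snd_eq_pictureCol hE hp)
  by_contra! hlt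
  have hz : (i, δ (i + 1) + occBefore α β E (i + 1) x) ∈ cellOf γ δ := by
    have hcol := (hf.1.mapsTo hp).2
    rw [hfp] at hcol
    exact ⟨show δ i < _ by omega, hcol.trans (hγ.2.1 i (i + 1) hi i.le_succ)⟩
  obtain ⟨t, ht, hft⟩ := hf.1.surjOn hz
  have htp : wle t p := wle_of_leSW (hf.2.2 t ht p hp (by rw [hft, hfp]; exact ⟨by omega, le_rfl⟩))
  have hEt : E t = i := by rw [hE t ht, hft]
  have hcol := hf.snd_eq_pictureCol hE ht
  rw [hft, pictureCol, hEt] at hcol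
  have := occBefore_mono (β := β) (T := E) (v := i) hα (wle_trans htp hpx)
  simp only at hcol
  omega

end IsPicture

section CanonicalPicture

variable {α β γ δ : ℕ → ℕ} {E : ℕ × ℕ → ℕ}

lemma IsSSkew.le_of_leNW (hα : IsPartition α) (hβ : IsPartition β) (hss : IsSSkew α β E)
    {p q : ℕ × ℕ} (hp : p ∈ cellOf α β) (hq : q ∈ cellOf α β) (h : leNW p q) : E p ≤ E q := by
  have hr := mem_cellOf_corner hα hβ hp hq h
  calc E p ≤ E (q.1, p.2) := by
        rcases h.1.lt_or_eq with hlt | heq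
        · exact (hss.2 p.1 q.1 p.2 hp hr hlt).le
        · rw [← heq]
    _ ≤ E q := hss.1 q.1 p.2 q.2 hr hq h.2

lemma IsSSkew.ncard_add_ncard_le_occBefore (hα : IsPartition α) (hss : IsSSkew α β E)
    {i j : ℕ} (hp : (i, j) ∈ cellOf α β) :
    {r | r ∈ cellOf α β ∧ r.1 < i ∧ E r = E (i, j)}.ncard +
        {r | r ∈ cellOf α β ∧ r.1 = i + 1 ∧ j ≤ r.2 ∧ E r = E (i, j) + 1}.ncard ≤
      occBefore α β E (E (i, j)) (i, j) := by
  set u := E (i, j)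
  set B := {r | r ∈ cellOf α β ∧ r.1 = i + 1 ∧ j ≤ r.2 ∧ E r = u + 1}
  have hi : 1 ≤ i := one_le_fst_of_mem_cellOf hα hp
  have hfin {S : Set (ℕ × ℕ)} (hS : ∀ r ∈ S, r ∈ cellOf α β) : S.Finite :=
    (cellOf_finite hα).subset hS
  have hinj : Set.InjOn (fun r => (i, r.2)) B := fun r hr s hs h =>
    Prod.ext (hr.2.1.trans hs.2.1.symm) (Prod.ext_iff.1 h).2
  have hdisj : Disjoint {r | r ∈ cellOf α β ∧ r.1 < i ∧ E r = u} ((fun r => (i, r.2)) '' B) := by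
    refine Set.disjoint_left.2 ?_
    rintro _ ⟨_, hri, _⟩ ⟨s, _, rfl⟩
    simp only at hri
    omega
  rw [← hinj.ncard_image, ← Set.ncard_union_eq hdisj (hfin fun r hr => hr.1)
    ((hfin fun r hr => hr.1).image _)]
  refine Set.ncard_le_ncard ?_ (hfin fun r hr => hr.1)
  rintro r (⟨hr, hri, hEr⟩ | ⟨⟨s₁, c⟩, ⟨hs, hsi, hjc, hEs⟩, rfl⟩)
  · exact ⟨hr, Or.inl (by omega), hEr⟩
  · simp only at hsi hjc
    subst hsi
    have hic : (i, c) ∈ cellOf α β :=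
      ⟨hp.1.trans_le hjc, hs.2.trans (hα.2.1 i (i + 1) hi i.le_succ)⟩
    have hbelow := hss.2 i (i + 1) c hic hs i.lt_succ_self
    have hright := hss.1 i j c hp hic hjc
    exact ⟨hic, Or.inr ⟨rfl, hjc⟩, show E (i, c) = u by omega⟩

lemma pictureCol_lt_of_wle (hα : IsPartition α) (hY : ShiftedYam α β 0 δ E)
    {p q : ℕ × ℕ} (hp : p ∈ cellOf α β) (hpos : 1 ≤ E p) (hq : q ∈ cellOf α β)
    (hE : E p ≤ E q) (h : wle q p) (hne : q ≠ p) :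
    pictureCol α β δ E q < pictureCol α β δ E p :=
  (hY.add_occBefore_le_of_le hq hpos hE).trans_lt
    (Nat.add_lt_add_left (occBefore_lt hα hp rfl h hne) _)

lemma pictureCol_succ_le (hα : IsPartition α) (hδ : IsPartition δ) (hss : IsSSkew α β E)
    (hpos : ∀ p ∈ cellOf α β, 1 ≤ E p) (hY : ShiftedYam α β 0 δ E) {i j : ℕ}
    (hp : (i, j) ∈ cellOf α β) (hq : (i + 1, j) ∈ cellOf α β) :
    pictureCol α β δ E (i + 1, j) ≤ pictureCol α β δ E (i, j) := by
  have hp_occ := hss.ncard_add_ncard_le_occBefore hα hp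
  set u := E (i, j)
  have hu : 1 ≤ u := hpos _ hp
  have hfin {S : Set (ℕ × ℕ)} (hS : ∀ r ∈ S, r ∈ cellOf α β) : S.Finite :=
    (cellOf_finite hα).subset hS
  set B := {r | r ∈ cellOf α β ∧ r.1 = i + 1 ∧ j ≤ r.2 ∧ E r = u + 1}
  have hrows := hY.add_ncard_le_of_rows hα hδ hss i hu
  have hchain := hY.add_occBefore_le_of_le hq (u := u + 1) (by omega)
    (hss.2 i (i + 1) j hp hq i.lt_succ_self)
  have hq_occ : occBefore α β E (u + 1) (i + 1, j) ≤
      {r | r ∈ cellOf α β ∧ r.1 ≤ i ∧ E r = u + 1}.ncard + B.ncard := by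
    refine (Set.ncard_le_ncard ?_ ((hfin fun r hr => hr.1).union (hfin fun r hr => hr.1))).trans
      (Set.ncard_union_le _ _)
    rintro r ⟨hr, hrq, hEr⟩
    unfold wle at hrq
    simp only at hrq
    rcases hrq with hri | ⟨hri, hjr⟩
    · exact Or.inl ⟨hr, by omega, hEr⟩
    · exact Or.inr ⟨hr, hri, hjr, hEr⟩
  show δ (E (i + 1, j)) + _ ≤ δ u + occBefore α β E u (i, j)
  omega

lemma pictureCol_le_of_fst_le (hα : IsPartition α) (hβ : IsPartition β) (hδ : IsPartition δ)
    (hss : IsSSkew α β E) (hpos : ∀ p ∈ cellOf α β, 1 ≤ E p) (hY : ShiftedYam α β 0 δ E)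
    {i i' j : ℕ} (hp : (i, j) ∈ cellOf α β) (hq : (i', j) ∈ cellOf α β) (h : i ≤ i') :
    pictureCol α β δ E (i', j) ≤ pictureCol α β δ E (i, j) := by
  induction i', h using Nat.le_induction with
  | base => exact le_rfl
  | succ k hik ih =>
    have hk := mem_cellOf_of_le_of_le hα hβ hp hq hik k.le_succ
    exact (pictureCol_succ_le hα hδ hss hpos hY hk hq).trans (ih hk)

lemma pictureCol_lt_of_leNW (hα : IsPartition α) (hβ : IsPartition β) (hδ : IsPartition δ)
    (hss : IsSSkew α β E) (hpos : ∀ p ∈ cellOf α β, 1 ≤ E p) (hY : ShiftedYam α β 0 δ E)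
    {p q : ℕ × ℕ} (hp : p ∈ cellOf α β) (hq : q ∈ cellOf α β) (h : leNW p q) (hlt : p.2 < q.2) :
    pictureCol α β δ E q < pictureCol α β δ E p := by
  have hr := mem_cellOf_corner hα hβ hp hq h
  have hrow : pictureCol α β δ E q < pictureCol α β δ E (q.1, p.2) :=
    pictureCol_lt_of_wle hα hY hr (hpos _ hr) hq (hss.1 q.1 p.2 q.2 hr hq h.2)
      (Or.inr ⟨rfl, hlt.le⟩) fun hqr => hlt.ne (congrArg Prod.snd hqr).symm
  exact hrow.trans_le (pictureCol_le_of_fst_le hα hβ hδ hss hpos hY hp hr h.1)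

lemma pictureCol_le_of_leNW (hα : IsPartition α) (hβ : IsPartition β) (hδ : IsPartition δ)
    (hss : IsSSkew α β E) (hpos : ∀ p ∈ cellOf α β, 1 ≤ E p) (hY : ShiftedYam α β 0 δ E)
    {p q : ℕ × ℕ} (hp : p ∈ cellOf α β) (hq : q ∈ cellOf α β) (h : leNW p q) :
    pictureCol α β δ E q ≤ pictureCol α β δ E p := by
  rcases h.2.lt_or_eq with hlt | heq
  · exact (pictureCol_lt_of_leNW hα hβ hδ hss hpos hY hp hq h hlt).le
  · obtain ⟨p₁, p₂⟩ := p
    obtain ⟨q₁, q₂⟩ := q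
    simp only at heq
    subst heq
    exact pictureCol_le_of_fst_le hα hβ hδ hss hpos hY hp hq h.1

lemma bijOn_pictureOf (hα : IsPartition α) (hγ : IsPartition γ)
    (hpos : ∀ p ∈ cellOf α β, 1 ≤ E p) (hcount : ∀ i, 1 ≤ i → occCount α β E i = γ i - δ i) :
    Set.BijOn (pictureOf α β δ E) (cellOf α β) (cellOf γ δ) := by
  refine ⟨fun p hp => ?_, fun p hp q hq hpq => ?_, fun y hy => ?_⟩
  · have h₁ := one_le_occBefore (β := β) (T := E) hα hp
    have h₂ := occBefore_le_occCount (β := β) (T := E) (v := E p) hα p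
    have h₃ := hcount (E p) (hpos p hp)
    show δ (E p) < δ (E p) + _ ∧ δ (E p) + _ ≤ γ (E p)
    omega
  · obtain ⟨hrow, hcol⟩ := Prod.ext_iff.1 hpq
    simp only [pictureOf, pictureCol] at hrow hcol
    rw [hrow] at hcol
    exact occBefore_injOn hα ⟨hp, hrow⟩ ⟨hq, rfl⟩ (by omega)
  · have hv := one_le_fst_of_mem_cellOf hγ hy
    obtain ⟨p, hp, hEp, hocc⟩ := exists_occBefore_eq (β := β) (T := E) hα (k := y.2 - δ y.1)
      (by have := hy.1; omega) (by have := hy.2; rw [hcount y.1 hv]; omega)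
    refine ⟨p, hp, Prod.ext hEp ?_⟩
    simp only [pictureOf, pictureCol, hEp, hocc]
    have := hy.1
    omega

lemma isPicture_pictureOf (hα : IsPartition α) (hβ : IsPartition β) (hγ : IsPartition γ)
    (hδ : IsPartition δ) (hss : IsSSkew α β E) (hpos : ∀ p ∈ cellOf α β, 1 ≤ E p)
    (hcount : ∀ i, 1 ≤ i → occCount α β E i = γ i - δ i) (hY : ShiftedYam α β 0 δ E) :
    IsPicture α β γ δ (pictureOf α β δ E) := by
  refine ⟨bijOn_pictureOf hα hγ hpos hcount, fun p hp q hq h => ?_, fun p hp q hq h => ?_⟩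
  · exact ⟨hss.le_of_leNW hα hβ hp hq h, pictureCol_le_of_leNW hα hβ hδ hss hpos hY hp hq h⟩
  · obtain ⟨hE, hcol⟩ := h
    have hpq : wle p q := by
      by_contra hpq
      obtain ⟨hqp, hne⟩ := wle_of_not_wle hpq
      exact absurd hcol (not_le.2 (pictureCol_lt_of_wle hα hY hp (hpos p hp) hq hE hqp hne))
    refine ⟨by unfold wle at hpq; omega, not_lt.1 fun hlt => ?_⟩
    exact absurd hcol (not_le.2 (pictureCol_lt_of_leNW hα hβ hδ hss hpos hY hp hq
      ⟨by unfold wle at hpq; omega, hlt.le⟩ hlt))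

end CanonicalPicture

theorem statement16_general (α β γ δ : ℕ → ℕ)
    (hα : IsPartition α) (hβ : IsPartition β)
    (hγ : IsPartition γ) (hδ : IsPartition δ)
    (E : ℕ × ℕ → ℕ) :
    (∃ f : ℕ × ℕ → ℕ × ℕ, IsPicture α β γ δ f ∧ ∀ p ∈ cellOf α β, E p = (f p).1) ↔
      (IsSSkew α β E ∧ (∀ p ∈ cellOf α β, 1 ≤ E p) ∧
        (∀ i, 1 ≤ i → occCount α β E i = γ i - δ i) ∧
        ShiftedYam α β 0 δ E) := by
  constructor
  · rintro ⟨f, hf, hE⟩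
    exact ⟨hf.isSSkew hE, fun p hp => hE p hp ▸ one_le_fst_of_mem_cellOf hγ (hf.1.mapsTo hp),
      fun i _ => hf.occCount_eq hE i, hf.shiftedYam hα hγ hδ hE⟩
  · rintro ⟨hss, hpos, hcount, hY⟩
    exact ⟨pictureOf α β δ E, isPicture_pictureOf hα hβ hγ hδ hss hpos hcount hY, fun _ _ => rfl⟩

/-- a skew tableau `E` of shape `α/β` is the row reading of a picture
`f : α/β → γ/δ` if and only if `E` is semistandard with positive entries, for each `i`
the symbol `i` occurs exactly `γᵢ − δᵢ` times, and `E` is `δ`-shifted Yamanouchi. -/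
theorem statement16 (α β γ δ : ℕ → ℕ)
    (hα : IsPartition α) (hβ : IsPartition β) (hβα : ∀ i, β i ≤ α i)
    (hγ : IsPartition γ) (hδ : IsPartition δ) (hδγ : ∀ i, δ i ≤ γ i)
    (E : ℕ × ℕ → ℕ) :
    (∃ f : ℕ × ℕ → ℕ × ℕ, IsPicture α β γ δ f ∧ ∀ p ∈ cellOf α β, E p = (f p).1) ↔
      (IsSSkew α β E ∧ (∀ p ∈ cellOf α β, 1 ≤ E p) ∧
        (∀ i, 1 ≤ i → occCount α β E i = γ i - δ i) ∧
        ShiftedYam α β 0 δ E) :=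
  statement16_general α β γ δ hα hβ hγ hδ E
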